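/- arXiv:2212.03652 — 2 statements merged into one kernel-verified Lean document; each statement's English description precedes it below -/
import Mathlib

section
/- Let (X,T) be a dynamical system and let x ∈ X. The following are equivalent: (i) x is a fixed point of T, i.e. Tx = x; (ii) N(x,U) is cofinite in ℕ₀ for every neighbourhood U of x; (iii) N(x,U) is thickly syndetic for every neighbourhood U of x; (iv) N(x,U) is thick for every neighbourhood U of x; (v) there exists δ > 1/2 such that Bd⁺(N(x,U)) ≥ δ for every neighbourhood U of x; (vi) for every neighbourhood U of x the set N(x,U) contains two consecutive integers. -/
open Filter Topology Set

/-- The return set `N(x,U) = {n ∈ ℕ₀ : T^n x ∈ U}`. -/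
def retSet {X : Type*} (T : X → X) (x : X) (U : Set X) : Set ℕ :=
  {n : ℕ | T^[n] x ∈ U}

/-- The number of elements of `A` in the window `[a, b]`. -/
noncomputable def windowCount (A : Set ℕ) (a b : ℕ) : ℕ :=
  Nat.card ↥(A ∩ Set.Icc a b)

/-- The upper Banach density of `A ⊆ ℕ₀`. -/
noncomputable def upperBanachDensity (A : Set ℕ) : ℝ :=
  Filter.limsup
    (fun N : ℕ => ⨆ n : ℕ, (windowCount A (n + 1) (n + N) : ℝ) / N) Filter.atTop

/-- `A ⊆ ℕ₀` is thick: it contains arbitrarily long intervals. -/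
def Thick (A : Set ℕ) : Prop :=
  ∀ m : ℕ, ∃ a : ℕ, Set.Icc a (a + m) ⊆ A

/-- `A ⊆ ℕ₀` is syndetic: it has bounded gaps. -/
def Syndetic (A : Set ℕ) : Prop :=
  ∃ m : ℕ, ∀ a : ℕ, (Set.Icc a (a + m) ∩ A).Nonempty

/-- `A ⊆ ℕ₀` is thickly syndetic: for every `m` there is a syndetic set `B` with
`B + [0,m] ⊆ A`. -/
def ThicklySyndetic (A : Set ℕ) : Prop :=
  ∀ m : ℕ, ∃ B : Set ℕ, Syndetic B ∧ ∀ b ∈ B, ∀ j ≤ m, b + j ∈ A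

lemma wc_le (A : Set ℕ) (a b : ℕ) : windowCount A a b ≤ b + 1 - a := by
  unfold windowCount
  calc Nat.card ↥(A ∩ Set.Icc a b) ≤ Nat.card ↥(Set.Icc a b) :=
        Nat.card_mono (Set.finite_Icc a b) Set.inter_subset_right
    _ = b + 1 - a := by simp [Nat.card_Icc]

lemma wc_univ (a b : ℕ) : windowCount Set.univ a b = b + 1 - a := by
  unfold windowCount
  simp [Nat.card_Icc]

lemma ubd_univ : upperBanachDensity Set.univ = 1 := by
  have h : ∀ᶠ N : ℕ in atTop,
      (fun N : ℕ => ⨆ n : ℕ, (windowCount Set.univ (n + 1) (n + N) : ℝ) / N) N = 1 := by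
    filter_upwards [eventually_ge_atTop 1] with N hN
    have : ∀ n : ℕ, (windowCount Set.univ (n + 1) (n + N) : ℝ) / N = 1 := by
      intro n
      rw [wc_univ]
      have : n + N + 1 - (n + 1) = N := by omega
      rw [this]
      field_simp
    simp only [this, ciSup_const]
  rw [upperBanachDensity, limsup_congr h, limsup_const]

lemma wc_noconsec (A : Set ℕ) (hA : ∀ n, ¬(n ∈ A ∧ n + 1 ∈ A)) (n N : ℕ) :
    windowCount A (n + 1) (n + N) ≤ (N + 1) / 2 := by
  unfold windowCount
  have key : Nat.card ↥(A ∩ Set.Icc (n+1) (n+N)) ≤ Nat.card ↥(Set.Icc 0 ((N-1)/2)) := by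
    apply Nat.card_le_card_of_injective
      (fun k => ⟨((k : ℕ) - (n+1)) / 2, by
        obtain ⟨k, hk, hk1, hk2⟩ := k
        simp only [Set.mem_Icc]
        omega⟩)
    · rintro ⟨k, hkA, hk1, hk2⟩ ⟨k', hk'A, hk'1, hk'2⟩ h
      simp only [Subtype.mk.injEq] at h ⊢
      by_contra hne
      have hne' : k ≠ k' := fun e => hne (by subst e; rfl)
      rcases (by omega : k + 1 = k' ∨ k' + 1 = k) with h' | h'
      · exact hA k ⟨hkA, h' ▸ hk'A⟩
      · exact hA k' ⟨hk'A, h' ▸ hkA⟩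
  rcases Nat.eq_zero_or_pos N with h0 | h0
  · subst h0
    have : Set.Icc (n+1) (n+0) = ∅ := Set.Icc_eq_empty (by omega)
    rw [this, Set.inter_empty]
    simp
  · have hcard : Nat.card ↥(Set.Icc 0 ((N-1)/2)) = (N-1)/2 + 1 := by
      simp [Nat.card_Icc]
    rw [hcard] at key
    omega

lemma ubd_noconsec (A : Set ℕ) (hA : ∀ n, ¬(n ∈ A ∧ n + 1 ∈ A)) :
    upperBanachDensity A ≤ 1 / 2 := by
  have hle : ∀ N : ℕ, (⨆ n : ℕ, (windowCount A (n + 1) (n + N) : ℝ) / N)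
      ≤ ((N : ℝ) + 1) / (2 * N) := by
    intro N
    apply ciSup_le
    intro n
    rcases Nat.eq_zero_or_pos N with h | h
    · simp [h]
    · rw [div_le_div_iff₀ (by positivity) (by positivity)]
      have h1 : (windowCount A (n + 1) (n + N) : ℝ) ≤ ((N + 1) / 2 : ℕ) := by
        exact_mod_cast wc_noconsec A hA n N
      have h2 : (((N + 1) / 2 : ℕ) : ℝ) * (2 * N) ≤ ((N : ℝ) + 1) * N := by
        have : (((N + 1) / 2 : ℕ) : ℝ) * 2 ≤ (N : ℝ) + 1 := by
          have := Nat.div_mul_le_self (N + 1) 2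
          exact_mod_cast this
        nlinarith [Nat.cast_nonneg (α := ℝ) N]
      calc (windowCount A (n + 1) (n + N) : ℝ) * (2 * N)
          ≤ (((N + 1) / 2 : ℕ) : ℝ) * (2 * N) := by
            apply mul_le_mul_of_nonneg_right h1 (by positivity)
        _ ≤ ((N : ℝ) + 1) * N := h2
  have htend : Tendsto (fun N : ℕ => ((N : ℝ) + 1) / (2 * N)) atTop (𝓝 (1/2)) := by
    have : (fun N : ℕ => ((N : ℝ) + 1) / (2 * N)) =ᶠ[atTop]
        fun N : ℕ => (1 + 1 / N) / 2 := by
      filter_upwards [eventually_ge_atTop 1] with N hN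
      have hN' : (N : ℝ) ≠ 0 := by positivity
      field_simp
    rw [tendsto_congr' this]
    have : Tendsto (fun N : ℕ => (1 : ℝ) + 1 / N) atTop (𝓝 1) := by
      simpa using (tendsto_const_nhds (x := (1:ℝ))).add (tendsto_one_div_atTop_nhds_zero_nat)
    simpa using this.div_const 2
  calc upperBanachDensity A
      ≤ limsup (fun N : ℕ => ((N : ℝ) + 1) / (2 * N)) atTop := by
        refine limsup_le_limsup (Filter.Eventually.of_forall hle) ?_ htend.isBoundedUnder_le
        exact isCoboundedUnder_le_of_eventually_le atTop (x := 0)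
          (Filter.Eventually.of_forall fun N => Real.iSup_nonneg fun n => by positivity)
    _ = 1 / 2 := htend.limsup_eq


/-- For a point `x` of a dynamical system, being a fixed point is equivalent to the
return sets of `x` to its neighbourhoods being cofinite (resp. thickly syndetic, thick,
of upper Banach density at least some `δ > 1/2`, containing two consecutive integers). -/
theorem stmt14 {X : Type*} [TopologicalSpace X] [T2Space X]
    (T : X → X) (hT : Continuous T) (x : X) :
    List.TFAE
      [T x = x,
       ∀ U ∈ 𝓝 x, {n : ℕ | n ∉ retSet T x U}.Finite,
       ∀ U ∈ 𝓝 x, ThicklySyndetic (retSet T x U),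
       ∀ U ∈ 𝓝 x, Thick (retSet T x U),
       ∃ δ : ℝ, 1 / 2 < δ ∧ ∀ U ∈ 𝓝 x, δ ≤ upperBanachDensity (retSet T x U),
       ∀ U ∈ 𝓝 x, ∃ n : ℕ, n ∈ retSet T x U ∧ n + 1 ∈ retSet T x U] := by
  have hfix : T x = x → ∀ U ∈ 𝓝 x, retSet T x U = Set.univ := by
    intro h1 U hU
    ext n
    simp [retSet, Function.iterate_fixed h1, mem_of_mem_nhds hU]
  tfae_have 1 → 2 := by
    intro h1 U hU
    rw [hfix h1 U hU]
    simp
  tfae_have 2 → 3 := by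
    intro h2 U hU m
    obtain ⟨M, hM⟩ := (h2 U hU).bddAbove
    refine ⟨Set.Ici (M + 1), ⟨M + 1, fun a => ⟨a + (M + 1), ?_, ?_⟩⟩, ?_⟩
    · simp only [Set.mem_Icc]; omega
    · simp only [Set.mem_Ici]; omega
    · intro b hb j _
      by_contra hbj
      have := hM hbj
      simp only [Set.mem_Ici] at hb
      omega
  tfae_have 3 → 4 := by
    intro h3 U hU m
    obtain ⟨B, ⟨m', hm'⟩, hB⟩ := h3 U hU m
    obtain ⟨b, _, hb2⟩ := hm' 0
    refine ⟨b, fun k hk => ?_⟩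
    simp only [Set.mem_Icc] at hk
    have := hB b hb2 (k - b) (by omega)
    rwa [Nat.add_sub_cancel' hk.1] at this
  tfae_have 4 → 6 := by
    intro h4 U hU
    obtain ⟨a, ha⟩ := h4 U hU 1
    exact ⟨a, ha ⟨le_refl a, by omega⟩, ha ⟨by omega, by omega⟩⟩
  tfae_have 6 → 1 := by
    intro h6
    by_contra hne
    obtain ⟨V, U, hVo, hUo, hTxV, hxU, hdisj⟩ := t2_separation hne
    have hW : U ∩ T ⁻¹' V ∈ 𝓝 x := by
      apply Filter.inter_mem (hUo.mem_nhds hxU)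
      exact (hVo.preimage hT).mem_nhds (by simpa using hTxV)
    obtain ⟨n, hn, hn1⟩ := h6 _ hW
    simp only [retSet, Set.mem_setOf_eq, Set.mem_inter_iff] at hn hn1
    have h1 : T^[n + 1] x ∈ V := by
      rw [Function.iterate_succ_apply']
      exact hn.2
    exact hdisj.le_bot ⟨h1, hn1.1⟩
  tfae_have 1 → 5 := by
    intro h1
    refine ⟨1, by norm_num, fun U hU => ?_⟩
    rw [hfix h1 U hU, ubd_univ]
  tfae_have 5 → 6 := by
    rintro ⟨δ, hδ, h5⟩ U hU
    by_contra hc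
    push_neg at hc
    have hno : ∀ n, ¬(n ∈ retSet T x U ∧ n + 1 ∈ retSet T x U) := by
      intro n ⟨h, h'⟩; exact hc n h h'
    have := (h5 U hU).trans (ubd_noconsec _ hno)
    linarith
  tfae_finish
end

section
/- Let F be a Furstenberg family such that span(E(S)) ⊆ FRec(S) for every complex linear dynamical system (Y,S), where E(S) denotes the set of unimodular eigenvectors of S. Then for every F-recurrent complex linear dynamical system (X,T) there exists an infinite-dimensional T-invariant vector subspace Z ⊆ X such that Z^N ⊆ FRec(T_(N)) for every N ∈ ℕ. In particular, FRec(T) is lineable. -/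
open Filter Topology Set

universe u

/-- The `N`-fold product map `T × ⋯ × T` on `X^N`. -/
def prodMap {X : Type*} (T : X → X) (N : ℕ) : (Fin N → X) → (Fin N → X) :=
  fun x i => T (x i)

/-- A Furstenberg family. -/
def IsFurstenbergFamily (F : Set (Set ℕ)) : Prop :=
  (∀ A ∈ F, A.Infinite) ∧ (∀ A ∈ F, ∀ B : Set ℕ, A ⊆ B → B ∈ F) ∧
  (∀ A ∈ F, ∀ n : ℕ, (A ∩ {m : ℕ | n ≤ m}) ∈ F)

/-- `x` is an `F`-recurrent point for `T`. -/
def FRecPt {X : Type*} [TopologicalSpace X] (F : Set (Set ℕ)) (T : X → X) (x : X) : Prop :=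
  ∀ U ∈ 𝓝 x, retSet T x U ∈ F

/-- The set of unimodular eigenvectors of `T`. -/
def unimodEigenvectors {X : Type*} [AddCommGroup X] [Module ℂ X] (T : X → X) : Set X :=
  {y : X | y ≠ 0 ∧ ∃ lam : ℂ, ‖lam‖ = 1 ∧ T y = lam • y}

/-!
If some `F`-recurrent vector `x` has an infinite-dimensional orbit span, take `Z` to be the image
of `x` under the commutant of `T`: an operator `q` commuting with `T` carries the return times of
`x` to those of `q x`, and likewise for tuples `(q_i x)_i` under `T_(N)`.

Otherwise every `F`-recurrent `x` lies in a finite-dimensional invariant subspace on which it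
recurs along some ultrafilter `l`. Its generalized-eigenvector components recur along `l` too;
for an eigenvector this forces `|μ| = 1`, and a Jordan chain `T v = μ v + e` would give
`T^n v = μ^n (v + n μ⁻¹ e)`, which cannot return to `v`. Hence `x ∈ span E(T)`, so
`Z = span E(T)` is dense, thus infinite-dimensional, and `Z^N ⊆ span E(T_(N))`.
-/

namespace FRecPt

variable {X Y : Type*} [TopologicalSpace X] [TopologicalSpace Y] {F : Set (Set ℕ)}
  {T : X → X} {S : Y → Y} {x : X}

theorem map (hF : ∀ A ∈ F, ∀ B : Set ℕ, A ⊆ B → B ∈ F) (hx : FRecPt F T x) {q : X → Y}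
    (hq : Continuous q) (hqTS : Function.Semiconj q T S) : FRecPt F S (q x) := by
  intro U hU
  refine hF _ (hx _ (hq.continuousAt.preimage_mem_nhds hU)) _ fun n hn => ?_
  change S^[n] (q x) ∈ U
  rwa [← (hqTS.iterate_right n).eq]

theorem mapClusterPt (hF : ∀ A ∈ F, A.Infinite) (hx : FRecPt F T x) :
    MapClusterPt x atTop fun n => T^[n] x :=
  mapClusterPt_iff_frequently.2 fun _ hU =>
    Nat.frequently_atTop_iff_infinite.2 (hF _ (hx _ hU))

end FRecPt

theorem eq_zero_of_tendsto_smul {X ι : Type*} [AddCommGroup X] [Module ℂ X]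
    [TopologicalSpace X] [ContinuousSMul ℂ X] [T2Space X] {l : Filter ι} [l.NeBot] {c : ι → ℂ}
    {y : ι → X} {y₀ e : X} (hc : Tendsto c l (𝓝 0)) (hy : Tendsto y l (𝓝 y₀))
    (hcy : Tendsto (fun i => c i • y i) l (𝓝 e)) : e = 0 :=
  tendsto_nhds_unique hcy (by simpa only [zero_smul] using hc.smul hy)

theorem ContinuousLinearMap.pow_apply_eq_smul_add_nsmul {X : Type*} [AddCommGroup X]
    [Module ℂ X] [TopologicalSpace X] {T : X →L[ℂ] X} {μ : ℂ} {v e : X} (he : T e = μ • e)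
    (hv : T v = μ • (v + e)) (n : ℕ) : (T ^ n) v = μ ^ n • (v + n • e) := by
  induction n with
  | zero => simp
  | succ n ih =>
    rw [pow_succ', mul_apply_eq_comp, ih, map_smul, map_add, map_nsmul, hv, he, pow_succ]
    module

section OrbitSpan

variable {X : Type*} [AddCommGroup X] [Module ℂ X] [TopologicalSpace X] {T : X →L[ℂ] X}

def orbitSpan (T : X →L[ℂ] X) (x : X) : Submodule ℂ X :=
  Submodule.span ℂ (range fun n => (T ^ n) x)

theorem mem_orbitSpan_self (x : X) : x ∈ orbitSpan T x :=
  Submodule.subset_span ⟨0, by simp⟩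

theorem apply_mem_orbitSpan {x y : X} (hy : y ∈ orbitSpan T x) : T y ∈ orbitSpan T x := by
  refine (Submodule.span_le (p := (orbitSpan T x).comap (T : X →ₗ[ℂ] X)).2 ?_) hy
  rintro _ ⟨n, rfl⟩
  exact Submodule.subset_span ⟨n + 1, by simp only [pow_succ', mul_apply_eq_comp]; rfl⟩

end OrbitSpan

section RecurrentAlong

variable {X : Type*} [AddCommGroup X] [Module ℂ X] [TopologicalSpace X]
  [IsTopologicalAddGroup X] [ContinuousSMul ℂ X]

/-- Fixing the filter `l` makes recurrence a linear condition, so the generalized-eigenvector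
components of a recurrent vector inherit its recurrence. -/
def recurrentAlong (T : X →L[ℂ] X) (l : Filter ℕ) : Submodule ℂ X where
  carrier := {y | Tendsto (fun n => (T ^ n) y) l (𝓝 y)}
  add_mem' {y₁ y₂} h₁ h₂ := by simpa only [mem_ofPred_eq, map_add] using h₁.add h₂
  zero_mem' := by simpa only [mem_ofPred_eq, map_zero] using tendsto_const_nhds
  smul_mem' c y h := by simpa only [mem_ofPred_eq, map_smul] using h.const_smul c

variable {T : X →L[ℂ] X} {l : Filter ℕ}

theorem mem_recurrentAlong {y : X} :
    y ∈ recurrentAlong T l ↔ Tendsto (fun n => (T ^ n) y) l (𝓝 y) :=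
  Iff.rfl

theorem apply_mem_recurrentAlong {q : X →L[ℂ] X} (hq : Commute q T) {y : X}
    (hy : y ∈ recurrentAlong T l) : q y ∈ recurrentAlong T l := by
  have := (q.continuous.tendsto y).comp hy
  simpa only [mem_recurrentAlong, Function.comp_def, ← mul_apply_eq_comp, (hq.pow_right _).eq]
    using this

theorem apply_sub_smul_one_mem_recurrentAlong {μ : ℂ} {y : X} (hy : y ∈ recurrentAlong T l) :
    (T - μ • 1) y ∈ recurrentAlong T l :=
  apply_mem_recurrentAlong ((Commute.refl T).sub_left ((Commute.one_left T).smul_left μ)) hy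

theorem orbitSpan_le_recurrentAlong {x : X} (hx : x ∈ recurrentAlong T l) :
    orbitSpan T x ≤ recurrentAlong T l :=
  Submodule.span_le.2 <| range_subset_iff.2 fun n =>
    apply_mem_recurrentAlong ((Commute.refl T).pow_left n) hx

variable [T2Space X] [l.NeBot]

theorem norm_eq_one_of_mem_recurrentAlong (hl : l ≤ atTop) {e : X} {μ : ℂ} (he : e ≠ 0)
    (hTe : T e = μ • e) (hrec : e ∈ recurrentAlong T l) : ‖μ‖ = 1 := by
  have hpow (n : ℕ) : (T ^ n) e = μ ^ n • e := by
    induction n with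
    | zero => simp
    | succ n ih => rw [pow_succ', mul_apply_eq_comp, ih, map_smul, hTe, smul_smul, pow_succ]
  rcases lt_trichotomy ‖μ‖ 1 with hμ | hμ | hμ
  · refine absurd (eq_zero_of_tendsto_smul
      ((tendsto_pow_atTop_nhds_zero_of_norm_lt_one hμ).mono_left hl)
      (tendsto_const_nhds (x := e)) ?_) he
    simpa only [hpow] using mem_recurrentAlong.1 hrec
  · exact hμ
  · have hμ' : ‖μ⁻¹‖ < 1 := by rw [norm_inv]; exact inv_lt_one_of_one_lt₀ hμ
    have hμ0 : μ ≠ 0 := norm_pos_iff.1 (one_pos.trans hμ)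
    refine absurd (eq_zero_of_tendsto_smul
      ((tendsto_pow_atTop_nhds_zero_of_norm_lt_one hμ').mono_left hl) hrec ?_) he
    simpa only [hpow, smul_smul, ← mul_pow, inv_mul_cancel₀ hμ0, one_pow, one_smul]
      using tendsto_const_nhds

theorem sub_smul_one_apply_eq_zero_of_sq (hl : l ≤ atTop) {v : X} {μ : ℂ}
    (hrec : v ∈ recurrentAlong T l) (hv : ((T - μ • 1 : X →L[ℂ] X) ^ 2) v = 0) :
    (T - μ • 1) v = 0 := by
  set e := (T - μ • 1) v with he_def
  by_contra he
  have hTe : T e = μ • e := by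
    have : (T - μ • 1) e = 0 := by rwa [he_def, ← mul_apply_eq_comp, ← sq]
    simpa [sub_eq_zero] using this
  have hμ1 : ‖μ‖ = 1 :=
    norm_eq_one_of_mem_recurrentAlong hl he hTe (apply_sub_smul_one_mem_recurrentAlong hrec)
  have hμ : μ ≠ 0 := norm_ne_zero_iff.1 (by rw [hμ1]; exact one_ne_zero)
  have hpow := T.pow_apply_eq_smul_add_nsmul (v := v) (e := μ⁻¹ • e)
    (by rw [map_smul, hTe, smul_comm]) (by rw [smul_add, smul_inv_smul₀ hμ]; simp [he_def])
  -- `‖μ ^ n‖ = 1`, so dividing `T ^ n v` by `n μ ^ n` isolates the nilpotent part `μ⁻¹ e`.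
  have hc : Tendsto (fun n : ℕ => ((n : ℂ) * μ ^ n)⁻¹) l (𝓝 0) := by
    refine (tendsto_zero_iff_norm_tendsto_zero.2 ?_).mono_left hl
    simpa [norm_mul, norm_pow, hμ1] using tendsto_inv_atTop_nhds_zero_nat (𝕜 := ℝ)
  refine he ((smul_eq_zero.1 (eq_zero_of_tendsto_smul hc (mem_recurrentAlong.1 hrec) ?_))
    |>.resolve_left (inv_ne_zero hμ))
  have hlim : Tendsto (fun n : ℕ => (n : ℂ)⁻¹ • v + μ⁻¹ • e) l (𝓝 (μ⁻¹ • e)) := by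
    simpa using (((tendsto_inv_atTop_nhds_zero_nat (𝕜 := ℂ)).mono_left hl).smul_const v).add_const
      (μ⁻¹ • e)
  refine hlim.congr' (((eventually_ne_atTop 0).filter_mono hl).mono fun n hn => ?_)
  show _ = _ • _
  rw [hpow, smul_smul, mul_inv, mul_assoc, inv_mul_cancel₀ (pow_ne_zero _ hμ), mul_one, smul_add,
    ← Nat.cast_smul_eq_nsmul ℂ, smul_smul, inv_mul_cancel₀ (Nat.cast_ne_zero.2 hn), one_smul]

theorem sub_smul_one_apply_eq_zero_of_pow (hl : l ≤ atTop) {μ : ℂ} :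
    ∀ {k : ℕ} {w : X}, w ∈ recurrentAlong T l → ((T - μ • 1 : X →L[ℂ] X) ^ k) w = 0 →
      (T - μ • 1) w = 0
  | 0, w, _, hw => by rw [pow_zero, one_apply_eq_self] at hw; rw [hw, map_zero]
  | _ + 1, _, hrec, hw => sub_smul_one_apply_eq_zero_of_sq hl hrec <| by
    rw [sq, mul_apply_eq_comp]
    exact sub_smul_one_apply_eq_zero_of_pow hl (apply_sub_smul_one_mem_recurrentAlong hrec)
      (by rwa [← mul_apply_eq_comp, ← pow_succ])

theorem apply_eq_smul_of_mem_maxGenEigenspace (hl : l ≤ atTop) {w : X} {μ : ℂ}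
    (hrec : w ∈ recurrentAlong T l)
    (hw : w ∈ Module.End.maxGenEigenspace (T : Module.End ℂ X) μ) : T w = μ • w := by
  obtain ⟨k, hk⟩ := (Module.End.mem_maxGenEigenspace _ _ _).1 hw
  rw [← ContinuousLinearMap.toLinearMap_one, ← ContinuousLinearMap.toLinearMap_smul,
    ← ContinuousLinearMap.toLinearMap_sub, ← ContinuousLinearMap.toLinearMap_pow] at hk
  simpa [sub_eq_zero] using sub_smul_one_apply_eq_zero_of_pow hl hrec hk

theorem mem_unimodEigenvectors_of_mem_maxGenEigenspace (hl : l ≤ atTop) {w : X} {μ : ℂ}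
    (hw0 : w ≠ 0) (hrec : w ∈ recurrentAlong T l)
    (hw : w ∈ Module.End.maxGenEigenspace (T : Module.End ℂ X) μ) :
    w ∈ unimodEigenvectors ⇑T :=
  have hTw := apply_eq_smul_of_mem_maxGenEigenspace hl hrec hw
  ⟨hw0, μ, norm_eq_one_of_mem_recurrentAlong hl hw0 hTw hrec, hTw⟩

theorem le_span_unimodEigenvectors (hl : l ≤ atTop) {M : Submodule ℂ X} [FiniteDimensional ℂ M]
    (hMT : ∀ y ∈ M, T y ∈ M) (hMrec : M ≤ recurrentAlong T l) :
    M ≤ Submodule.span ℂ (unimodEigenvectors ⇑T) := by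
  set f : Module.End ℂ M := (T : Module.End ℂ X).restrict hMT
  suffices h : ⨆ μ, f.maxGenEigenspace μ ≤
      (Submodule.span ℂ (unimodEigenvectors ⇑T)).comap M.subtype by
    intro y hy
    have hy' : (⟨y, hy⟩ : M) ∈ ⨆ μ, f.maxGenEigenspace μ := by
      rw [Module.End.iSup_maxGenEigenspace_eq_top]
      exact Submodule.mem_top
    exact h hy'
  refine iSup_le fun μ z hz => ?_
  replace hz := (Module.End.genEigenspace_restrict _ M ⊤ μ hMT).le hz
  by_cases hz0 : (z : X) = 0
  · simp [hz0]
  · exact Submodule.subset_span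
      (mem_unimodEigenvectors_of_mem_maxGenEigenspace hl hz0 (hMrec z.2) hz)

theorem mem_span_unimodEigenvectors_of_mapClusterPt {x : X}
    (hx : MapClusterPt x atTop fun n => (T ^ n) x) [FiniteDimensional ℂ (orbitSpan T x)] :
    x ∈ Submodule.span ℂ (unimodEigenvectors ⇑T) := by
  obtain ⟨U, hU, hUx⟩ := mapClusterPt_iff_ultrafilter.1 hx
  exact le_span_unimodEigenvectors (l := U) hU (fun _ => apply_mem_orbitSpan)
    (orbitSpan_le_recurrentAlong hUx) (mem_orbitSpan_self x)

theorem mem_span_unimodEigenvectors_of_frecPt {F : Set (Set ℕ)} (hF : ∀ A ∈ F, A.Infinite) {x : X}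
    (hx : FRecPt F ⇑T x) [FiniteDimensional ℂ (orbitSpan T x)] :
    x ∈ Submodule.span ℂ (unimodEigenvectors ⇑T) :=
  mem_span_unimodEigenvectors_of_mapClusterPt <| by
    simpa only [FunLike.coe_pow_eq_iterate] using hx.mapClusterPt hF

end RecurrentAlong

section CommutantOrbit

variable {X : Type*} [AddCommGroup X] [Module ℂ X] [TopologicalSpace X]
  [IsTopologicalAddGroup X] [ContinuousSMul ℂ X] {T : X →L[ℂ] X} {x : X}

def commutantOrbit (T : X →L[ℂ] X) (x : X) : Submodule ℂ X where
  carrier := {z | ∃ q : X →L[ℂ] X, Commute q T ∧ q x = z}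
  add_mem' := by
    rintro _ _ ⟨q₁, hq₁, rfl⟩ ⟨q₂, hq₂, rfl⟩
    exact ⟨q₁ + q₂, hq₁.add_left hq₂, rfl⟩
  zero_mem' := ⟨0, Commute.zero_left T, rfl⟩
  smul_mem' := by
    rintro c _ ⟨q, hq, rfl⟩
    exact ⟨c • q, hq.smul_left c, rfl⟩

theorem orbitSpan_le_commutantOrbit : orbitSpan T x ≤ commutantOrbit T x :=
  Submodule.span_le.2 <| range_subset_iff.2 fun n => ⟨T ^ n, (Commute.refl T).pow_left n, rfl⟩

theorem apply_mem_commutantOrbit {z : X} (hz : z ∈ commutantOrbit T x) :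
    T z ∈ commutantOrbit T x := by
  obtain ⟨q, hq, rfl⟩ := hz
  exact ⟨T * q, (Commute.refl T).mul_left hq, rfl⟩

variable {F : Set (Set ℕ)}

theorem frecPt_of_mem_commutantOrbit (hF : ∀ A ∈ F, ∀ B : Set ℕ, A ⊆ B → B ∈ F)
    (hx : FRecPt F ⇑T x) {z : X} (hz : z ∈ commutantOrbit T x) : FRecPt F ⇑T z := by
  obtain ⟨q, hq, rfl⟩ := hz
  exact hx.map hF q.continuous fun y => DFunLike.congr_fun hq.eq y

theorem frecPt_prodMap_of_mem_commutantOrbit (hF : ∀ A ∈ F, ∀ B : Set ℕ, A ⊆ B → B ∈ F)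
    (hx : FRecPt F ⇑T x) {N : ℕ} {z : Fin N → X}
    (hz : ∀ i, z i ∈ commutantOrbit T x) : FRecPt F (prodMap ⇑T N) z := by
  choose q hq hqx using hz
  have := hx.map hF (S := prodMap ⇑T N) (q := fun y i => q i y)
    (continuous_pi fun i => (q i).continuous) fun y => funext fun i => DFunLike.congr_fun (hq i).eq y
  rwa [funext hqx] at this

end CommutantOrbit

section UnimodEigenvectors

variable {X Y : Type*} [AddCommGroup X] [Module ℂ X] [AddCommGroup Y] [Module ℂ Y]

theorem mapsTo_unimodEigenvectors {T : X → X} {S : Y → Y} {L : X →ₗ[ℂ] Y}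
    (hL : Function.Injective L) (hLTS : ∀ y, L (T y) = S (L y)) :
    MapsTo L (unimodEigenvectors T) (unimodEigenvectors S) := by
  rintro y ⟨hy0, μ, hμ, hTy⟩
  exact ⟨(map_ne_zero_iff L hL).2 hy0, μ, hμ, by rw [← hLTS, hTy, map_smul]⟩

theorem apply_mem_span_unimodEigenvectors (T : Module.End ℂ X) {y : X}
    (hy : y ∈ Submodule.span ℂ (unimodEigenvectors ⇑T)) :
    T y ∈ Submodule.span ℂ (unimodEigenvectors ⇑T) := by
  refine (Submodule.span_le (p := (Submodule.span ℂ (unimodEigenvectors ⇑T)).comap T).2 ?_) hy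
  rintro e ⟨he0, μ, hμ, hTe⟩
  rw [SetLike.mem_coe, Submodule.mem_comap, hTe]
  exact Submodule.smul_mem _ μ (Submodule.subset_span ⟨he0, μ, hμ, hTe⟩)

theorem mem_span_unimodEigenvectors_prodMap (T : Module.End ℂ X) {N : ℕ} {z : Fin N → X}
    (hz : ∀ i, z i ∈ Submodule.span ℂ (unimodEigenvectors ⇑T)) :
    z ∈ Submodule.span ℂ (unimodEigenvectors (prodMap ⇑T N)) := by
  rw [← Finset.univ_sum_single z]
  refine Submodule.sum_mem _ fun i _ => ?_
  have hsingle : MapsTo (LinearMap.single ℂ (fun _ => X) i) (unimodEigenvectors ⇑T)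
      (unimodEigenvectors (prodMap ⇑T N)) :=
    mapsTo_unimodEigenvectors (Pi.single_injective (M := fun _ : Fin N => X) i)
      fun y => funext fun j => (Pi.apply_single (fun _ => T) (fun _ => map_zero T) i y j).symm
  have := Submodule.span_mono (R := ℂ) hsingle.image_subset
  rw [← Submodule.map_span] at this
  exact this ⟨z i, hz i, rfl⟩

end UnimodEigenvectors

theorem not_finiteDimensional_pi {X : Type*} [AddCommGroup X] [Module ℂ X]
    (hX : ¬ FiniteDimensional ℂ X) {N : ℕ} (hN : N ≠ 0) : ¬ FiniteDimensional ℂ (Fin N → X) :=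
  fun _ => hX <| Module.Finite.of_surjective
    (LinearMap.proj (R := ℂ) (φ := fun _ : Fin N => X) ⟨0, Nat.pos_of_ne_zero hN⟩)
    fun y => ⟨fun _ => y, rfl⟩

theorem Submodule.not_finiteDimensional_of_dense {X : Type*} [AddCommGroup X] [Module ℂ X]
    [TopologicalSpace X] [IsTopologicalAddGroup X] [ContinuousSMul ℂ X] [T2Space X]
    (hX : ¬ FiniteDimensional ℂ X) {Z : Submodule ℂ X} (hZ : Dense (Z : Set X)) :
    ¬ FiniteDimensional ℂ Z := by
  intro hZfin
  have hZtop : Z = ⊤ := by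
    rw [← Z.closed_of_finiteDimensional.submodule_topologicalClosure_eq]
    exact Submodule.dense_iff_topologicalClosure_eq_top.1 hZ
  subst hZtop
  exact hX (Submodule.topEquiv.finiteDimensional)

/-- Lineability of `FRec(T)` for families `F` with `span(E(S)) ⊆ FRec(S)` for every
complex linear dynamical system `(Y,S)`: every `F`-recurrent complex linear system
admits an infinite-dimensional `T`-invariant subspace `Z` with `Z^N ⊆ FRec(T_(N))` for
every `N`; in particular `FRec(T)` is lineable. -/
theorem stmt18 (F : Set (Set ℕ)) (hF : IsFurstenbergFamily F)
    (hEig : ∀ (Y : Type u) [AddCommGroup Y] [Module ℂ Y] [TopologicalSpace Y]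
      [IsTopologicalAddGroup Y] [ContinuousSMul ℂ Y] [PolishSpace Y],
      ¬ FiniteDimensional ℂ Y → ∀ S : Y →L[ℂ] Y,
        (Submodule.span ℂ (unimodEigenvectors (⇑S)) : Set Y) ⊆
          {y : Y | FRecPt F (⇑S) y})
    {X : Type u} [AddCommGroup X] [Module ℂ X] [TopologicalSpace X]
    [IsTopologicalAddGroup X] [ContinuousSMul ℂ X] [PolishSpace X]
    (hX : ¬ FiniteDimensional ℂ X)
    (T : X →L[ℂ] X) (hTrec : Dense {x : X | FRecPt F (⇑T) x}) :
    ∃ Z : Submodule ℂ X, ¬ FiniteDimensional ℂ Z ∧ (∀ x ∈ Z, T x ∈ Z) ∧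
      (∀ N : ℕ, ∀ z : Fin N → X, (∀ i, z i ∈ Z) → FRecPt F (prodMap (⇑T) N) z) ∧
      (Z : Set X) ⊆ {x : X | FRecPt F (⇑T) x} := by
  by_cases horbit : ∃ x, FRecPt F ⇑T x ∧ ¬ FiniteDimensional ℂ (orbitSpan T x)
  · obtain ⟨x, hx, hinf⟩ := horbit
    exact ⟨commutantOrbit T x,
      fun _ => hinf (Submodule.finiteDimensional_of_le orbitSpan_le_commutantOrbit),
      fun _ => apply_mem_commutantOrbit,
      fun _ _ => frecPt_prodMap_of_mem_commutantOrbit hF.2.1 hx,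
      fun _ => frecPt_of_mem_commutantOrbit hF.2.1 hx⟩
  push Not at horbit
  have hrec_le : {x | FRecPt F ⇑T x} ⊆ Submodule.span ℂ (unimodEigenvectors ⇑T) := fun x hx =>
    have := horbit x hx
    mem_span_unimodEigenvectors_of_frecPt hF.1 hx
  refine ⟨_, Submodule.not_finiteDimensional_of_dense hX (hTrec.mono hrec_le),
    fun _ => apply_mem_span_unimodEigenvectors (T : Module.End ℂ X), fun N z hz => ?_, hEig X hX T⟩
  rcases eq_or_ne N 0 with rfl | hN
  · -- `Fin 0 → X` is a single point, onto which any recurrent vector maps equivariantly.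
    obtain ⟨x, hx⟩ := hTrec.nonempty
    exact hx.map hF.2.1 (q := fun _ => z) continuous_const fun _ => Subsingleton.elim _ _
  · exact hEig (Fin N → X) (not_finiteDimensional_pi hX hN) (.piMap fun _ => T)
      (mem_span_unimodEigenvectors_prodMap (T : Module.End ℂ X) hz)
end
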